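/- Let e = (1/√χ)·E₁₁ with χ = 8(n+1). Write elements of m_⊥ as block matrices (a_⊥, 𝐚_⊥) = [[a_⊥, 𝐚_⊥],[𝐚_⊥^t, 0]] with a_⊥ ∈ iℝ, 𝐚_⊥ ∈ ℂ^{n-1}, and elements of h_⊥ as (c_⊥, 𝐜_⊥) = [[c_⊥, 𝐜_⊥],[-conj(𝐜_⊥)^t, 0]] with c_⊥ ∈ iℝ, 𝐜_⊥ ∈ ℂ^{n-1}. Then ad(e)(a_⊥, 𝐚_⊥) = (1/√χ)(2a_⊥, -conj(𝐚_⊥)) ∈ h_⊥ and ad(e)(c_⊥, 𝐜_⊥) = (1/√χ)(-2c_⊥, conj(𝐜_⊥)) ∈ m_⊥; in particular ad(e) restricts to a linear isomorphism between m_⊥ and h_⊥. -/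

import Mathlib

open Matrix

/-- element `(a_⊥, 𝐚_⊥) = [[a_⊥, 𝐚_⊥],[𝐚_⊥ᵀ, 0]]` of `m_⊥` (for `a_⊥ ∈ iℝ`) -/
def Mperp {m : ℕ} (a : ℂ) (v : Fin m → ℂ) :
    Matrix (Fin 1 ⊕ Fin m) (Fin 1 ⊕ Fin m) ℂ :=
  Matrix.fromBlocks (Matrix.of fun _ _ => a) (Matrix.of fun _ j => v j)
    (Matrix.of fun i _ => v i) 0

/-- element `(c_⊥, 𝐜_⊥) = [[c_⊥, 𝐜_⊥],[-conj(𝐜_⊥)ᵀ, 0]]` of `h_⊥` (for `c_⊥ ∈ iℝ`) -/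
def Hperp {m : ℕ} (c : ℂ) (w : Fin m → ℂ) :
    Matrix (Fin 1 ⊕ Fin m) (Fin 1 ⊕ Fin m) ℂ :=
  Matrix.fromBlocks (Matrix.of fun _ _ => c) (Matrix.of fun _ j => w j)
    (Matrix.of fun i _ => -(star (w i))) 0

/-- the regular element `e = (1/√χ)·E₁₁` -/
noncomputable def eMat (m : ℕ) (χ : ℝ) : Matrix (Fin 1 ⊕ Fin m) (Fin 1 ⊕ Fin m) ℂ :=
  (Real.sqrt χ)⁻¹ • Matrix.fromBlocks 1 0 0 0

/-- `ad(e)` on `m`: `A ↦ [e, A] = A·conj(e) - e·conj(A)` (with `conj e = e`) -/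
noncomputable def adE_m (m : ℕ) (χ : ℝ) (A : Matrix (Fin 1 ⊕ Fin m) (Fin 1 ⊕ Fin m) ℂ) :
    Matrix (Fin 1 ⊕ Fin m) (Fin 1 ⊕ Fin m) ℂ :=
  A * eMat m χ - eMat m χ * A.map star

/-- `ad(e)` on `h`: `C ↦ [e, C] = e·conj(C) - C·e` -/
noncomputable def adE_h (m : ℕ) (χ : ℝ) (C : Matrix (Fin 1 ⊕ Fin m) (Fin 1 ⊕ Fin m) ℂ) :
    Matrix (Fin 1 ⊕ Fin m) (Fin 1 ⊕ Fin m) ℂ :=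
  eMat m χ * C.map star - C * eMat m χ

/-! Since `e` is a multiple of `E₁₁`, `ad(e)` only sees the first row and column of a block matrix.
In the coordinates `(a_⊥, 𝐚_⊥)` and `(c_⊥, 𝐜_⊥)` it becomes the real-linear map
`(a, v) ↦ (2a, -conj v) / √χ`, which is bijective as soon as `√χ ≠ 0`. -/

open Function Set Complex

theorem Set.bijOn_range_of_comp_eq {α β γ δ : Type*} {f : α → β} {g : γ → α} {h : δ → β}
    {φ : γ → δ} (hcomm : ∀ x, f (g x) = h (φ x)) (hφ : Bijective φ) (hh : Injective h) :
    BijOn f (range g) (range h) := by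
  refine ⟨?_, ?_, ?_⟩
  · rintro _ ⟨x, rfl⟩
    exact ⟨φ x, (hcomm x).symm⟩
  · rintro _ ⟨x, rfl⟩ _ ⟨y, rfl⟩ hxy
    rw [hcomm, hcomm] at hxy
    rw [hφ.injective (hh hxy)]
  · rintro _ ⟨y, rfl⟩
    obtain ⟨x, rfl⟩ := hφ.surjective y
    exact ⟨g x, mem_range_self x, hcomm x⟩

variable {m : ℕ}

lemma adE_m_Mperp (χ : ℝ) (a : ℂ) (v : Fin m → ℂ) :
    adE_m m χ (Mperp a v) = (√χ)⁻¹ • Hperp (a - star a) (-star v) := by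
  ext (i | i) (j | j) <;>
    simp [adE_m, Mperp, Hperp, eMat, mul_apply, Fintype.sum_sum_type, fromBlocks,
      Fin.fin_one_eq_zero] <;> ring

lemma adE_h_Hperp (χ : ℝ) (c : ℂ) (w : Fin m → ℂ) :
    adE_h m χ (Hperp c w) = (√χ)⁻¹ • Mperp (star c - c) (star w) := by
  ext (i | i) (j | j) <;>
    simp [adE_h, Mperp, Hperp, eMat, mul_apply, Fintype.sum_sum_type, fromBlocks,
      Fin.fin_one_eq_zero] <;> ring

lemma real_smul_Hperp (r : ℝ) (c : ℂ) (w : Fin m → ℂ) :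
    r • Hperp c w = Hperp (r * c) ((r : ℂ) • w) := by
  ext (i | i) (j | j) <;> simp [Hperp, fromBlocks, Complex.real_smul]

lemma Hperp_inj {c c' : ℂ} {w w' : Fin m → ℂ} : Hperp c w = Hperp c' w' ↔ c = c' ∧ w = w' := by
  refine ⟨fun h => ⟨?_, funext fun j => ?_⟩, fun ⟨hc, hw⟩ => hc ▸ hw ▸ rfl⟩
  · simpa [Hperp] using congrFun (congrFun h (.inl 0)) (.inl 0)
  · simpa [Hperp] using congrFun (congrFun h (.inl 0)) (.inr j)

lemma I_mul_ofReal_sub_star (a : ℝ) : I * a - star (I * a) = 2 * (I * a) := by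
  simp only [star_mul', RCLike.star_def, conj_I, conj_ofReal]; ring

lemma star_sub_I_mul_ofReal (c : ℝ) : star (I * c) - I * c = -(2 * (I * c)) := by
  simp only [star_mul', RCLike.star_def, conj_I, conj_ofReal]; ring

lemma Hperp_I_mul_injective : Injective fun q : ℝ × (Fin m → ℂ) => Hperp (I * q.1) q.2 := by
  rintro ⟨r, w⟩ ⟨r', w'⟩ h
  obtain ⟨hr, rfl⟩ := Hperp_inj.1 h
  simpa [I_ne_zero] using hr

lemma adE_m_Mperp_I_mul (χ : ℝ) (a : ℝ) (v : Fin m → ℂ) :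
    adE_m m χ (Mperp (I * a) v) = Hperp (I * ↑(2 / √χ * a)) (-(√χ : ℂ)⁻¹ • star v) := by
  rw [adE_m_Mperp, I_mul_ofReal_sub_star, real_smul_Hperp]
  congr 1
  · push_cast; ring
  · rw [smul_neg, neg_smul, ofReal_inv]

/-- With `n = m+1` and `χ = 8(n+1)`,
`ad(e)(a_⊥, 𝐚_⊥) = (1/√χ)(2a_⊥, -conj 𝐚_⊥) ∈ h_⊥` and
`ad(e)(c_⊥, 𝐜_⊥) = (1/√χ)(-2c_⊥, conj 𝐜_⊥) ∈ m_⊥`; in particular `ad(e)` restricts to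
a linear isomorphism (a bijection) between `m_⊥` and `h_⊥`. -/
theorem adE_perp_isomorphism (m : ℕ) (χ : ℝ) (hχ : χ = 8 * ((m : ℝ) + 1 + 1)) :
    (∀ (a : ℝ) (v : Fin m → ℂ),
      adE_m m χ (Mperp (Complex.I * (a : ℂ)) v)
        = (Real.sqrt χ)⁻¹ •
            Hperp (2 * (Complex.I * (a : ℂ))) (fun j => -(star (v j)))) ∧
    (∀ (c : ℝ) (w : Fin m → ℂ),
      adE_h m χ (Hperp (Complex.I * (c : ℂ)) w)
        = (Real.sqrt χ)⁻¹ •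
            Mperp (-(2 * (Complex.I * (c : ℂ)))) (fun j => star (w j))) ∧
    Set.BijOn (adE_m m χ)
      {X | ∃ (a : ℝ) (v : Fin m → ℂ), X = Mperp (Complex.I * (a : ℂ)) v}
      {Y | ∃ (c : ℝ) (w : Fin m → ℂ), Y = Hperp (Complex.I * (c : ℂ)) w} := by
  have hs : √χ ≠ 0 := by rw [hχ]; positivity
  refine ⟨fun a v => by rw [adE_m_Mperp, I_mul_ofReal_sub_star]; rfl,
    fun c w => by rw [adE_h_Hperp, star_sub_I_mul_ofReal]; rfl, ?_⟩
  have hM : {X | ∃ (a : ℝ) (v : Fin m → ℂ), X = Mperp (I * a) v} =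
      range fun p : ℝ × (Fin m → ℂ) => Mperp (I * p.1) p.2 := by
    ext; simp [eq_comm]
  have hH : {Y | ∃ (c : ℝ) (w : Fin m → ℂ), Y = Hperp (I * c) w} =
      range fun q : ℝ × (Fin m → ℂ) => Hperp (I * q.1) q.2 := by
    ext; simp [eq_comm]
  have hφ : Bijective (Prod.map (2 / √χ * ·) fun v : Fin m → ℂ => -(√χ : ℂ)⁻¹ • star v) :=
    (mulLeft_bijective₀ _ (div_ne_zero two_ne_zero hs)).prodMap
      ((IsUnit.smul_bijective (by simpa using hs)).comp star_involutive.bijective)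
  rw [hM, hH]
  exact Set.bijOn_range_of_comp_eq (fun p => adE_m_Mperp_I_mul χ p.1 p.2) hφ Hperp_I_mul_injective
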